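/- Let δ ≤ y < 1 satisfy the branch conditions y ≥ δ^(β1/α2), y^(α2/β1) < δ^(α1/β2), and δ^(−α1/β2)·y^(α2/β1) ≥ δ^(α1/β1) (so the g-orbit of (1, y; E) follows the state pattern E → R → S → E). Then g³(1, y; E) = (1, δ^(1 + β1/β2)·y^(−α2/α1); E). In other words, the return map to the edge x = 1 along this branch pattern is y ↦ δ^(1 + β1/β2)·y^(−α2/α1). -/
import Mathlib


/-- The discrete state of a cow: eating, resting (lying down), or standing. -/
inductive CowState
  | E | R | S
deriving DecidableEq

open CowState

/-- The Poincaré map `g` of the single-cow model, acting on points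
`(x, y; θ)` of the boundary of the square `[δ,1]²` together with a state label.
Powers are real powers (`Real.rpow`). -/
noncomputable def g (α1 α2 β1 β2 δ : ℝ) : ℝ × ℝ × CowState → ℝ × ℝ × CowState
  | (_x, y, .E) =>
      if δ ^ (β1 / α2) ≤ y then (y ^ (α2 / β1), 1, R)
      else (δ, δ ^ (-(β1 / α2)) * y, S)
  | (x, _y, .R) =>
      if δ ^ (α1 / β2) ≤ x then (1, x ^ (β2 / α1), E)
      else (δ ^ (-(α1 / β2)) * x, δ, S)
  | (x, y, .S) =>
      if x = δ then
        -- on the edge `x = δ`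
        (if y ≤ δ ^ (β1 / α1) then (1, δ ^ (-(β1 / α1)) * y, E)
         else (y ^ (-(α1 / β1)) * δ, 1, R))
      else
        -- on the edge `y = δ`
        (if δ ^ (α1 / β1) ≤ x then (1, x ^ (-(β1 / α1)) * δ, E)
         else (δ ^ (-(α1 / β1)) * x, 1, R))

/-- The Poincaré section `Σ = {(1,y;E) : δ ≤ y ≤ 1} ∪ {(x,1;R) : δ ≤ x < 1}`. -/
def inSigma (δ : ℝ) : ℝ × ℝ × CowState → Prop
  | (x, y, .E) => x = 1 ∧ δ ≤ y ∧ y ≤ 1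
  | (x, y, .R) => δ ≤ x ∧ x < 1 ∧ y = 1
  | (_, _, .S) => False

/-- The first-return map `f` on the Poincaré section `Σ`:
`f(w) = g(w)` if `g(w) ∈ Σ`, and `f(w) = g(g(w))` otherwise. -/
noncomputable def f (α1 α2 β1 β2 δ : ℝ) (w : ℝ × ℝ × CowState) : ℝ × ℝ × CowState := by
  classical
  exact if inSigma δ (g α1 α2 β1 β2 δ w) then g α1 α2 β1 β2 δ w
        else g α1 α2 β1 β2 δ (g α1 α2 β1 β2 δ w)

/-- if `δ ≤ y < 1` satisfies the branch conditions
`y ≥ δ^(β1/α2)`, `y^(α2/β1) < δ^(α1/β2)`, and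
`δ^(−α1/β2)·y^(α2/β1) ≥ δ^(α1/β1)` (so the `g`-orbit of `(1,y;E)` follows the
state pattern E → R → S → E), then
`g³(1,y;E) = (1, δ^(1+β1/β2)·y^(−α2/α1); E)`; i.e. the return map to the
edge `x = 1` along this branch pattern is `y ↦ δ^(1+β1/β2)·y^(−α2/α1)`. -/
theorem return_map_ERSE_branch
    (α1 α2 β1 β2 δ : ℝ)
    (hα1 : 0 < α1) (hα2 : 0 < α2) (hβ1 : 0 < β1) (hβ2 : 0 < β2)
    (hδ0 : 0 < δ) (hδ1 : δ < 1)
    (y : ℝ) (hyl : δ ≤ y) (hyu : y < 1)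
    (hb1 : δ ^ (β1 / α2) ≤ y)
    (hb2 : y ^ (α2 / β1) < δ ^ (α1 / β2))
    (hb3 : δ ^ (α1 / β1) ≤ δ ^ (-(α1 / β2)) * y ^ (α2 / β1)) :
    (g α1 α2 β1 β2 δ)^[3] (1, y, E)
      = (1, δ ^ (1 + β1 / β2) * y ^ (-(α2 / α1)), E) := by

  have hy0 : (0:ℝ) < y := lt_of_lt_of_le hδ0 hyl
  have hstep1 : g α1 α2 β1 β2 δ (1, y, E) = (y ^ (α2 / β1), 1, R) := by
    simp [g, hb1]
  have hstep2 : g α1 α2 β1 β2 δ (y ^ (α2 / β1), 1, R)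
      = (δ ^ (-(α1 / β2)) * y ^ (α2 / β1), δ, S) := by
    simp [g, not_le.mpr hb2]
  have h3 : (g α1 α2 β1 β2 δ)^[3] (1, y, E)
      = g α1 α2 β1 β2 δ (δ ^ (-(α1 / β2)) * y ^ (α2 / β1), δ, S) := by
    simp [Function.iterate_succ_apply, hstep1, hstep2]
  rw [h3]
  set x := δ ^ (-(α1 / β2)) * y ^ (α2 / β1) with hx
  have hxy : x ^ (-(β1 / α1)) = δ ^ (β1 / β2) * y ^ (-(α2 / α1)) := by
    rw [hx, Real.mul_rpow (Real.rpow_nonneg hδ0.le _) (Real.rpow_nonneg hy0.le _),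
        ← Real.rpow_mul hδ0.le, ← Real.rpow_mul hy0.le]
    congr 2 <;> field_simp <;> ring
  have hkey : x ^ (-(β1 / α1)) * δ = δ ^ (1 + β1 / β2) * y ^ (-(α2 / α1)) := by
    rw [hxy, Real.rpow_add hδ0, Real.rpow_one]; ring
  by_cases hxδ : x = δ
  · have hb3' : δ ^ (α1 / β1) ≤ δ ^ (1:ℝ) := by rw [Real.rpow_one]; exact hxδ ▸ hb3
    have hexp : (1:ℝ) ≤ α1 / β1 := by
      exact (Real.rpow_le_rpow_left_iff_of_base_lt_one hδ0 hδ1).mp hb3'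
    have hyδ : δ ≤ δ ^ (β1 / α1) := by
      have : β1 / α1 ≤ 1 := by
        rw [div_le_one hα1]
        have := (one_le_div hβ1).mp hexp
        linarith
      calc δ = δ ^ (1:ℝ) := (Real.rpow_one δ).symm
        _ ≤ δ ^ (β1 / α1) := Real.rpow_le_rpow_of_exponent_ge hδ0 hδ1.le this
    have : g α1 α2 β1 β2 δ (x, δ, S) = (1, δ ^ (-(β1 / α1)) * δ, E) := by
      simp [g, hxδ, hyδ]
    rw [this]
    have : δ ^ (-(β1 / α1)) * δ = x ^ (-(β1 / α1)) * δ := by rw [hxδ]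
    rw [this, hkey]
  · have : g α1 α2 β1 β2 δ (x, δ, S) = (1, x ^ (-(β1 / α1)) * δ, E) := by
      simp [g, hxδ, hb3]
    rw [this, hkey]
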